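/- arXiv:1807.08046 — 6 statements merged into one kernel-verified Lean document; each statement's English description precedes it below -/
import Mathlib

section
/- Let ψ(x) = ½‖x‖² on ℝⁿ. Suppose x_{t-1}, x_t, y_{t-1} ∈ ℝⁿ satisfy ψ(x_t) ≥ ψ(x_{t-1}) and ⟨∇ψ(x_{t-1}), x_t − x_{t-1}⟩ ≥ 0. Let α ∈ (0,1], set y_t = α x_t + (1−α) y_{t-1}, and define Δ_{t-1} = ψ(y_{t-1}) − ψ(x_{t-1}), Δ_t = ψ(y_t) − ψ(x_t), β = α/(1+α). Then Δ_t ≤ ((1−2β)/(1−β)) · [ Δ_{t-1} − ((1−β)/β²)·½‖y_t − β x_{t-1} − (1−β) y_{t-1}‖² − β·½‖x_{t-1} − y_{t-1}‖² ]. -/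
/-!
Write `x = x_{t-1}`, `y = y_{t-1}`, `u = x_t` and `φ = ½‖·‖²`. Since `y_t` is a convex combination,
`Δ_t = (1 - α) (φ y - φ u - α ½‖u - y‖²)`. With `β = α/(1+α)` the vector `y_t - β x - (1-β) y` equals
`α (u - (x + α y)/(1+α))`, so `smul_norm_sub_sq_add_norm_sub_sq` turns the bracket of the claim into
`φ y - φ u - α ½‖u - y‖² + ⟪x, u - x⟫`. Hence the right-hand side exceeds `Δ_t` by exactly
`(1 - α) ⟪x, u - x⟫ ≥ 0`.
-/

open RealInnerProductSpace

variable {E : Type*} [NormedAddCommGroup E] [InnerProductSpace ℝ E]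

theorem norm_smul_add_one_sub_smul_sq (a : ℝ) (u y : E) :
    ‖a • u + (1 - a) • y‖ ^ 2 = a * ‖u‖ ^ 2 + (1 - a) * ‖y‖ ^ 2 - a * (1 - a) * ‖u - y‖ ^ 2 := by
  simp only [← real_inner_self_eq_norm_sq, inner_add_left, inner_add_right, inner_sub_left,
    inner_sub_right, real_inner_smul_left, real_inner_smul_right, real_inner_comm u y]
  ring

theorem smul_norm_sub_sq_add_norm_sub_sq {a : ℝ} (ha : 1 + a ≠ 0) (u x y : E) :
    a * ‖u - y‖ ^ 2 + ‖u - x‖ ^ 2 =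
      (1 + a) * ‖u - (1 + a)⁻¹ • (x + a • y)‖ ^ 2 + a / (1 + a) * ‖x - y‖ ^ 2 := by
  simp only [← real_inner_self_eq_norm_sq, inner_add_left, inner_add_right, inner_sub_left,
    inner_sub_right, real_inner_smul_left, real_inner_smul_right, real_inner_comm u y,
    real_inner_comm u x, real_inner_comm x y]
  field_simp
  ring

theorem half_norm_sq_eq_add_inner_add (x u : E) :
    (1 / 2) * ‖u‖ ^ 2 = (1 / 2) * ‖x‖ ^ 2 + ⟪x, u - x⟫ + (1 / 2) * ‖u - x‖ ^ 2 := by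
  have h := norm_add_sq_real x (u - x)
  rw [add_sub_cancel] at h
  linarith

theorem half_norm_sq_gap_add_inner_eq {α : ℝ} (hα : α ≠ 0) (h1α : 1 + α ≠ 0) (x u y : E) :
    let β := α / (1 + α)
    (1 / 2) * ‖α • u + (1 - α) • y‖ ^ 2 - (1 / 2) * ‖u‖ ^ 2 + (1 - α) * ⟪x, u - x⟫ =
      (1 - 2 * β) / (1 - β) *
        (((1 / 2) * ‖y‖ ^ 2 - (1 / 2) * ‖x‖ ^ 2)
          - (1 - β) / β ^ 2 * ((1 / 2) * ‖α • u + (1 - α) • y - β • x - (1 - β) • y‖ ^ 2)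
          - β * ((1 / 2) * ‖x - y‖ ^ 2)) := by
  intro β
  have hcoef₁ : (1 - 2 * β) / (1 - β) = 1 - α := by
    simp only [β]; field_simp; ring
  have hcoef₂ : (1 - β) / β ^ 2 = (1 + α) / α ^ 2 := by
    simp only [β]; field_simp; ring
  have hvec : α • u + (1 - α) • y - β • x - (1 - β) • y = α • (u - (1 + α)⁻¹ • (x + α • y)) := by
    simp only [β]
    match_scalars <;> field_simp; ring
  have hnorm : ‖α • u + (1 - α) • y - β • x - (1 - β) • y‖ ^ 2 =
      α ^ 2 * ‖u - (1 + α)⁻¹ • (x + α • y)‖ ^ 2 := by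
    rw [hvec, norm_smul, mul_pow, Real.norm_eq_abs, sq_abs]
  have hkey := smul_norm_sub_sq_add_norm_sub_sq h1α u x y
  have hexp := half_norm_sq_eq_add_inner_add x u
  rw [hcoef₁, hcoef₂, hnorm, norm_smul_add_one_sub_smul_sq]
  generalize ‖u - (1 + α)⁻¹ • (x + α • y)‖ = r at hkey ⊢
  have hcancel : (1 + α) / α ^ 2 * (1 / 2 * (α ^ 2 * r ^ 2)) = (1 + α) * r ^ 2 / 2 := by
    field_simp
  rw [hcancel]
  linear_combination -(1 - α) / 2 * hkey - (1 - α) * hexp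

theorem stmt_0_general {n : ℕ} (xtm xt ytm yt : EuclideanSpace ℝ (Fin n)) (α β : ℝ)
    (hα0 : 0 < α) (hα1 : α ≤ 1)
    (hyt : yt = α • xt + (1 - α) • ytm)
    (hβ : β = α / (1 + α))
    (hgrad : 0 ≤ (inner ℝ xtm (xt - xtm) : ℝ)) :
    (1/2) * ‖yt‖^2 - (1/2) * ‖xt‖^2 ≤
      (1 - 2*β)/(1 - β) *
        (((1/2) * ‖ytm‖^2 - (1/2) * ‖xtm‖^2)
          - (1 - β)/β^2 * ((1/2) * ‖yt - β • xtm - (1 - β) • ytm‖^2)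
          - β * ((1/2) * ‖xtm - ytm‖^2)) := by
  subst hyt hβ
  rw [← half_norm_sq_gap_add_inner_eq hα0.ne' (by linarith) xtm xt ytm]
  have hslack : 0 ≤ (1 - α) * ⟪xtm, xt - xtm⟫ := mul_nonneg (by linarith) hgrad
  linarith

/-- Lemma 1 (gap bound for BlitzMN line search) for ψ(x) = ½‖x‖². -/
theorem stmt_0 {n : ℕ} (xtm xt ytm yt : EuclideanSpace ℝ (Fin n)) (α β : ℝ)
    (hα0 : 0 < α) (hα1 : α ≤ 1)
    (hyt : yt = α • xt + (1 - α) • ytm)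
    (hβ : β = α / (1 + α))
    (hmono : (1/2) * ‖xtm‖^2 ≤ (1/2) * ‖xt‖^2)
    (hgrad : 0 ≤ (inner ℝ xtm (xt - xtm) : ℝ)) :
    (1/2) * ‖yt‖^2 - (1/2) * ‖xt‖^2 ≤
      (1 - 2*β)/(1 - β) *
        (((1/2) * ‖ytm‖^2 - (1/2) * ‖xtm‖^2)
          - (1 - β)/β^2 * ((1/2) * ‖yt - β • xtm - (1 - β) • ytm‖^2)
          - β * ((1/2) * ‖xtm - ytm‖^2)) :=
  stmt_0_general xtm xt ytm yt α β hα0 hα1 hyt hβ hgrad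
end

section
/- Let f : ℝⁿ → ℝ be 1-strongly convex with minimizer x⋆. Let f₀ : ℝⁿ → ℝ be 1-strongly convex with f₀(x) ≤ f(x) for all x, and let x₀ be the minimizer of f₀. Then for any y₀ ∈ ℝⁿ, setting Δ₀ = f(y₀) − f₀(x₀), one has ‖x⋆ − ½(x₀ + y₀)‖² ≤ Δ₀ − ¼‖x₀ − y₀‖²; in particular x⋆ lies in the closed ball of center ½(x₀+y₀) and radius √(Δ₀ − ¼‖x₀ − y₀‖²). -/
/-!
Strong convexity of `f₀` at its minimizer `x₀` and `f₀ ≤ f` give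
`f₀ x₀ + ½‖x⋆ - x₀‖² ≤ f x⋆`, and strong convexity of `f` at `x⋆` gives
`f x⋆ + ½‖y₀ - x⋆‖² ≤ f y₀`. Adding these, `½(‖x⋆ - x₀‖² + ‖y₀ - x⋆‖²) ≤ f y₀ - f₀ x₀`, and by
Apollonius' identity the left side is `‖x⋆ - ½(x₀ + y₀)‖² + ¼‖x₀ - y₀‖²`.
-/

open Filter Topology

section NormedSpace

variable {E : Type*} [NormedAddCommGroup E] [NormedSpace ℝ E] {s : Set E} {m : ℝ} {f : E → ℝ}
  {x z : E}

/-- Moving from the minimizer `z` a fraction `t` of the way towards `x` cannot decrease `f`, so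
strong convexity gives `f z + (1 - t) * m / 2 * ‖x - z‖ ^ 2 ≤ f x`; then let `t → 0`. -/
theorem StrongConvexOn.add_sq_norm_sub_le_of_isMinOn (hf : StrongConvexOn s m f)
    (hmin : IsMinOn f s z) (hz : z ∈ s) (hx : x ∈ s) :
    f z + m / 2 * ‖x - z‖ ^ 2 ≤ f x := by
  have hstep : ∀ t ∈ Set.Ioo (0 : ℝ) 1, f z + (1 - t) * (m / 2 * ‖x - z‖ ^ 2) ≤ f x := by
    rintro t ⟨ht0, ht1⟩
    have hconv := hf.2 hx hz ht0.le (sub_nonneg.2 ht1.le) (add_sub_cancel t 1)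
    have hle := isMinOn_iff.1 hmin _ (hf.1 hx hz ht0.le (sub_nonneg.2 ht1.le) (add_sub_cancel t 1))
    simp only [smul_eq_mul] at hconv
    refine le_of_mul_le_mul_left ?_ ht0
    linarith
  have hlim : Tendsto (fun t : ℝ ↦ f z + (1 - t) * (m / 2 * ‖x - z‖ ^ 2)) (𝓝[>] 0)
      (𝓝 (f z + m / 2 * ‖x - z‖ ^ 2)) := by
    have : Continuous (fun t : ℝ ↦ f z + (1 - t) * (m / 2 * ‖x - z‖ ^ 2)) := by fun_prop
    simpa using (this.tendsto 0).mono_left nhdsWithin_le_nhds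
  exact le_of_tendsto hlim (mem_of_superset (Ioo_mem_nhdsGT one_pos) hstep)

end NormedSpace

section InnerProductSpace

variable {E : Type*} [NormedAddCommGroup E] [InnerProductSpace ℝ E]

theorem strongConvexOn_one_of_convexOn_sub_sq_norm_div_two {f : E → ℝ}
    (hf : ConvexOn ℝ Set.univ fun x ↦ f x - ‖x‖ ^ 2 / 2) : StrongConvexOn Set.univ 1 f :=
  strongConvexOn_iff_convex.2 <| by simpa only [one_div, inv_mul_eq_div] using hf

theorem norm_sub_half_smul_add_sq_add (a b c : E) :
    ‖c - (1 / 2 : ℝ) • (a + b)‖ ^ 2 + ‖a - b‖ ^ 2 / 4 = (‖c - a‖ ^ 2 + ‖b - c‖ ^ 2) / 2 := by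
  have h := parallelogram_law_with_norm ℝ (c - a) (b - c)
  rw [show c - a + (b - c) = b - a by abel,
    show c - a - (b - c) = (2 : ℝ) • (c - (1 / 2 : ℝ) • (a + b)) by module,
    norm_smul, norm_sub_rev b a, Real.norm_ofNat, mul_pow] at h
  linarith

end InnerProductSpace

/-- The minimizer of a 1-strongly convex function lies in the safe ball. -/
theorem stmt_2 {n : ℕ} (f f0 : EuclideanSpace ℝ (Fin n) → ℝ)
    (xstar x0 y0 : EuclideanSpace ℝ (Fin n))
    (hf : ConvexOn ℝ Set.univ (fun x => f x - ‖x‖^2 / 2))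
    (hf0 : ConvexOn ℝ Set.univ (fun x => f0 x - ‖x‖^2 / 2))
    (hxstar : ∀ x, f xstar ≤ f x)
    (hx0 : ∀ x, f0 x0 ≤ f0 x)
    (hle : ∀ x, f0 x ≤ f x) :
    ‖xstar - (1/2 : ℝ) • (x0 + y0)‖^2 ≤ (f y0 - f0 x0) - ‖x0 - y0‖^2 / 4 ∧
      xstar ∈ Metric.closedBall ((1/2 : ℝ) • (x0 + y0))
        (Real.sqrt ((f y0 - f0 x0) - ‖x0 - y0‖^2 / 4)) := by
  have hlower : f0 x0 + 1 / 2 * ‖xstar - x0‖ ^ 2 ≤ f0 xstar :=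
    (strongConvexOn_one_of_convexOn_sub_sq_norm_div_two hf0).add_sq_norm_sub_le_of_isMinOn
      (fun x _ ↦ hx0 x) trivial trivial
  have hupper : f xstar + 1 / 2 * ‖y0 - xstar‖ ^ 2 ≤ f y0 :=
    (strongConvexOn_one_of_convexOn_sub_sq_norm_div_two hf).add_sq_norm_sub_le_of_isMinOn
      (fun x _ ↦ hxstar x) trivial trivial
  have hsq : ‖xstar - (1/2 : ℝ) • (x0 + y0)‖^2 ≤ (f y0 - f0 x0) - ‖x0 - y0‖^2 / 4 := by
    linarith [norm_sub_half_smul_add_sq_add x0 y0 xstar, hle xstar]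
  refine ⟨hsq, ?_⟩
  rw [Metric.mem_closedBall, dist_eq_norm]
  exact Real.le_sqrt_of_sq_le hsq
end

section
/- Let f, f_S : ℝⁿ → ℝ ∪ {+∞} be convex lower semicontinuous 1-strongly convex functions with f(x) = f_S(x) for all x in an open ball S₁ that contains the minimizer x⋆ of f in its closure. Assume additionally that if x⋆ lies on the boundary of S₁ there is a point y₀ in the closure of S₁ with y₀ ≠ x⋆ and f(y₀) = f(x⋆) + ½‖y₀ − x⋆‖². Then x⋆ also minimizes f_S. -/
/-!
Strong convexity gives the quadratic growth `f x ≥ f x⋆ + ½‖x - x⋆‖²` around the minimizer.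
This bound is attained at a point `z` of the ball: at `x⋆` itself if `x⋆` is interior, and
otherwise at the midpoint of `x⋆` and `y₀`, which lies in the open ball by strict convexity.
On the ball, the convex function `fS - ½‖· - x⋆‖²` coincides with `f - ½‖· - x⋆‖² ≥ f x⋆`, so `z`
is a local, hence global, minimizer of it. Thus `fS ≥ f x⋆ + ½‖· - x⋆‖²` everywhere, and
`fS x⋆ = f x⋆` because finite convex functions on `ℝⁿ` are continuous.
-/

open Set Metric

section StrongConvexity

variable {E : Type*} [NormedAddCommGroup E] [InnerProductSpace ℝ E] {m : ℝ} {f : E → ℝ}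

lemma StrongConvexOn.continuous [FiniteDimensional ℝ E] (hf : StrongConvexOn univ m f) :
    Continuous f := by
  have hg := (strongConvexOn_iff_convex.1 hf).continuousOn isOpen_univ
  have hsq : Continuous fun x : E ↦ m / 2 * ‖x‖ ^ 2 := by fun_prop
  exact ((continuousOn_univ.1 hg).add hsq).congr fun x ↦ sub_add_cancel _ _

lemma StrongConvexOn.convexOn_sub_sq_norm_sub {s : Set E} (hf : StrongConvexOn s m f) (a : E) :
    ConvexOn ℝ s fun x ↦ f x - m / 2 * ‖x - a‖ ^ 2 := by
  have haff := ((m • innerSL ℝ a : E →L[ℝ] ℝ) : E →ₗ[ℝ] ℝ).convexOn hf.1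
    |>.add_const (-(m / 2 * ‖a‖ ^ 2))
  refine ((strongConvexOn_iff_convex.1 hf).add haff).congr fun x _ ↦ ?_
  simp only [Pi.add_apply, ContinuousLinearMap.coe_coe, smul_apply, innerSL_apply_apply,
    smul_eq_mul, norm_sub_sq_real, real_inner_comm a x]
  ring

lemma StrongConvexOn.add_sq_norm_sub_le_of_forall_le (hf : StrongConvexOn univ m f) {x₀ : E}
    (hmin : ∀ y, f x₀ ≤ f y) (x : E) : f x₀ + m / 2 * ‖x - x₀‖ ^ 2 ≤ f x := by
  have hsegment : Ioo (0 : ℝ) 1 ⊆ {t | f x₀ + (1 - t) * (m / 2 * ‖x - x₀‖ ^ 2) ≤ f x} := by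
    intro t ⟨ht₀, ht₁⟩
    have h := hf.2 (mem_univ x₀) (mem_univ x) (sub_nonneg.2 ht₁.le) ht₀.le (sub_add_cancel 1 t)
    have := hmin ((1 - t) • x₀ + t • x)
    simp only [smul_eq_mul, norm_sub_rev x₀] at h
    have key : t * (f x₀ + (1 - t) * (m / 2 * ‖x - x₀‖ ^ 2)) ≤ t * f x := by linarith
    exact le_of_mul_le_mul_left key ht₀
  have hclosed := (isClosed_le (by fun_prop) continuous_const).closure_subset_iff.2 hsegment
  simpa using hclosed (by simp [closure_Ioo] : (0 : ℝ) ∈ closure (Ioo 0 1))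

lemma StrongConvexOn.apply_midpoint_le_of_eq (hf : StrongConvexOn univ m f) {x y : E}
    (hy : f y = f x + m / 2 * ‖y - x‖ ^ 2) :
    f (midpoint ℝ x y) ≤ f x + m / 2 * ‖midpoint ℝ x y - x‖ ^ 2 := by
  have h := hf.2 (mem_univ x) (mem_univ y) (by norm_num : (0 : ℝ) ≤ 1 / 2)
    (by norm_num : (0 : ℝ) ≤ 1 / 2) (by norm_num)
  have hmid : (1 / 2 : ℝ) • x + (1 / 2 : ℝ) • y = midpoint ℝ x y := by
    rw [midpoint_eq_smul_add, smul_add]; norm_num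
  rw [hmid] at h
  rw [midpoint_sub_left, norm_smul]
  simp only [smul_eq_mul, hy, norm_sub_rev x y] at h
  norm_num at h ⊢
  linarith

end StrongConvexity

lemma midpoint_mem_ball_of_mem_closure {E : Type*} [NormedAddCommGroup E] [NormedSpace ℝ E]
    [StrictConvexSpace ℝ E] {c x y : E} {R : ℝ} (hx : x ∈ closure (ball c R))
    (hy : y ∈ closure (ball c R)) (hxy : x ≠ y) : midpoint ℝ x y ∈ ball c R := by
  have hR : 0 < R := by
    by_contra! h
    simp [ball_eq_empty.2 h] at hx
  rw [closure_ball c hR.ne'] at hx hy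
  rw [← interior_closedBall c hR.ne']
  exact (strictConvex_closedBall ℝ c R).openSegment_subset hx hy hxy
    (midpoint_mem_openSegment x y)

theorem stmt_3_general {n : ℕ} (f fS : EuclideanSpace ℝ (Fin n) → ℝ)
    (c : EuclideanSpace ℝ (Fin n)) (R : ℝ) (xstar : EuclideanSpace ℝ (Fin n))
    (hf : ConvexOn ℝ Set.univ (fun x => f x - ‖x‖^2/2))
    (hfS : ConvexOn ℝ Set.univ (fun x => fS x - ‖x‖^2/2))
    (heq : ∀ x ∈ Metric.ball c R, f x = fS x)
    (hmin : ∀ x, f xstar ≤ f x)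
    (hcl : xstar ∈ closure (Metric.ball c R))
    (hbd : xstar ∈ frontier (Metric.ball c R) →
      ∃ y0 ∈ closure (Metric.ball c R), y0 ≠ xstar ∧
        f y0 = f xstar + ‖y0 - xstar‖^2 / 2) :
    ∀ x, fS xstar ≤ fS x := by
  have toStrongConvexOn {g : EuclideanSpace ℝ (Fin n) → ℝ}
      (hg : ConvexOn ℝ univ fun x ↦ g x - ‖x‖ ^ 2 / 2) : StrongConvexOn univ 1 g :=
    strongConvexOn_iff_convex.2 <| hg.congr fun x _ ↦ by ring
  replace hf := toStrongConvexOn hf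
  replace hfS := toStrongConvexOn hfS
  have hgrowth := hf.add_sq_norm_sub_le_of_forall_le hmin
  obtain ⟨z, hz, hfz⟩ : ∃ z ∈ ball c R, f z ≤ f xstar + 1 / 2 * ‖z - xstar‖ ^ 2 := by
    by_cases hx : xstar ∈ ball c R
    · exact ⟨xstar, hx, by simp⟩
    obtain ⟨y0, hy0, hne, hy0eq⟩ := hbd ⟨hcl, by rwa [isOpen_ball.interior_eq]⟩
    exact ⟨midpoint ℝ xstar y0, midpoint_mem_ball_of_mem_closure hcl hy0 hne.symm,
      hf.apply_midpoint_le_of_eq (by rw [hy0eq]; ring)⟩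
  have hlocal : IsLocalMin (fun x ↦ fS x - 1 / 2 * ‖x - xstar‖ ^ 2) z := by
    filter_upwards [isOpen_ball.mem_nhds hz] with w hw
    rw [← heq w hw, ← heq z hz]
    linarith [hgrowth w]
  have hglobal := IsMinOn.of_isLocalMin_of_convex_univ hlocal (hfS.convexOn_sub_sq_norm_sub xstar)
  have hxstar : f xstar = fS xstar :=
    Set.EqOn.closure (fun x hx ↦ heq x hx) hf.continuous hfS.continuous hcl
  intro x
  rw [← heq z hz] at hglobal
  linarith [hglobal x, hgrowth z, sq_nonneg ‖x - xstar‖]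

/-- If a 1-strongly convex lsc function agrees with f on an open ball containing the
minimizer of f in its closure (with the tightness condition on the boundary), then the
minimizer of f also minimizes the screened objective. -/
theorem stmt_3 {n : ℕ} (f fS : EuclideanSpace ℝ (Fin n) → ℝ)
    (c : EuclideanSpace ℝ (Fin n)) (R : ℝ) (xstar : EuclideanSpace ℝ (Fin n))
    (hf : ConvexOn ℝ Set.univ (fun x => f x - ‖x‖^2/2))
    (hfS : ConvexOn ℝ Set.univ (fun x => fS x - ‖x‖^2/2))
    (hlsc : LowerSemicontinuous f) (hlscS : LowerSemicontinuous fS)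
    (heq : ∀ x ∈ Metric.ball c R, f x = fS x)
    (hmin : ∀ x, f xstar ≤ f x)
    (hcl : xstar ∈ closure (Metric.ball c R))
    (hbd : xstar ∈ frontier (Metric.ball c R) →
      ∃ y0 ∈ closure (Metric.ball c R), y0 ≠ xstar ∧
        f y0 = f xstar + ‖y0 - xstar‖^2 / 2) :
    ∀ x, fS xstar ≤ fS x :=
  stmt_3_general f fS c R xstar hf hfS heq hmin hcl hbd
end

section
/- Fix x₀, y₀ ∈ ℝⁿ and Δ₀ > 0 with ‖x₀ − y₀‖² ≤ 2Δ₀. For β ∈ (0, ½) define τ(β) = 2β√(Δ₀ − ¼‖x₀ − y₀‖²) and the open ball B(β) with center β x₀ + (1−β) y₀ and radius τ(β). Then the union S = ⋃_{β∈(0,½)} B(β) equals the open ball S₁ = { x : ‖x − ½(x₀ + y₀)‖ < √(Δ₀ − ¼‖x₀ − y₀‖²) }. -/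
open Metric

section ConvexCombination

variable {E : Type*} [NormedAddCommGroup E] [NormedSpace ℝ E]

theorem dist_convexComb_half_smul_add (x y : E) (β : ℝ) :
    dist (β • x + (1 - β) • y) ((1/2 : ℝ) • (x + y)) = |β - 1/2| * dist x y := by
  rw [dist_eq_norm, dist_eq_norm, ← Real.norm_eq_abs, ← norm_smul]
  congr 1
  module

theorem dist_convexComb_half_smul_add_le {x y : E} {r β : ℝ} (hxy : dist x y ≤ 2 * r)
    (hβ : β ≤ 1/2) :
    dist (β • x + (1 - β) • y) ((1/2 : ℝ) • (x + y)) ≤ (1 - 2 * β) * r := by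
  rw [dist_convexComb_half_smul_add, abs_of_nonpos (by linarith)]
  nlinarith

theorem iUnion_ball_convexComb_eq_ball {x y : E} {r : ℝ} (hxy : dist x y ≤ 2 * r) :
    ⋃ β ∈ Set.Ioo (0 : ℝ) (1/2), ball (β • x + (1 - β) • y) (2 * β * r)
      = ball ((1/2 : ℝ) • (x + y)) r := by
  apply Set.Subset.antisymm
  · refine Set.iUnion₂_subset fun β hβ => ball_subset_ball' ?_
    linarith [dist_convexComb_half_smul_add_le hxy hβ.2.le]
  · intro z hz
    have hr : 0 < r := pos_of_mem_ball hz
    set N := dist z ((1/2 : ℝ) • (x + y))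
    have hN : N < r := hz
    -- any `β > (r + N) / (4r)` makes the ball around the `β`-point reach `z`
    obtain ⟨β, hβlo, hβhi⟩ : ∃ β, (r + N) / (4 * r) < β ∧ β < 1/2 :=
      exists_between (by rw [div_lt_iff₀ (by positivity)]; linarith)
    have hβpos : 0 < β := lt_of_le_of_lt (by positivity) hβlo
    have hβr : r + N < 4 * β * r := by
      rw [div_lt_iff₀ (by positivity)] at hβlo; linarith
    refine Set.mem_biUnion ⟨hβpos, hβhi⟩ (mem_ball.2 ?_)
    calc dist z (β • x + (1 - β) • y)
        ≤ N + dist (β • x + (1 - β) • y) ((1/2 : ℝ) • (x + y)) := dist_triangle_right _ _ _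
      _ ≤ N + (1 - 2 * β) * r := by gcongr; exact dist_convexComb_half_smul_add_le hxy hβhi.le
      _ < 2 * β * r := by linarith

end ConvexCombination

theorem stmt_5_general {n : ℕ} (x0 y0 : EuclideanSpace ℝ (Fin n)) (Δ : ℝ)
    (hd : ‖x0 - y0‖^2 ≤ 2 * Δ) :
    (⋃ β ∈ Set.Ioo (0:ℝ) (1/2),
        Metric.ball (β • x0 + (1 - β) • y0) (2 * β * Real.sqrt (Δ - ‖x0 - y0‖^2/4)))
      = Metric.ball ((1/2 : ℝ) • (x0 + y0)) (Real.sqrt (Δ - ‖x0 - y0‖^2/4)) := by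
  refine iUnion_ball_convexComb_eq_ball ?_
  have h : |dist x0 y0 / 2| ≤ Real.sqrt (Δ - ‖x0 - y0‖^2/4) :=
    Real.abs_le_sqrt (by rw [dist_eq_norm]; linarith)
  linarith [le_abs_self (dist x0 y0 / 2)]

/-- At ξ = 1 the union of equivalence balls equals the BlitzScreen safe ball. -/
theorem stmt_5 {n : ℕ} (x0 y0 : EuclideanSpace ℝ (Fin n)) (Δ : ℝ)
    (hΔ : 0 < Δ) (hd : ‖x0 - y0‖^2 ≤ 2 * Δ) :
    (⋃ β ∈ Set.Ioo (0:ℝ) (1/2),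
        Metric.ball (β • x0 + (1 - β) • y0) (2 * β * Real.sqrt (Δ - ‖x0 - y0‖^2/4)))
      = Metric.ball ((1/2 : ℝ) • (x0 + y0)) (Real.sqrt (Δ - ‖x0 - y0‖^2/4)) :=
  stmt_5_general x0 y0 Δ hd
end

section
/- Fix x, y ∈ ℝⁿ with x ≠ y, and a radius function τ : (0,½) → ℝ≥0. Let S = ⋃_{β∈(0,½)} B(β x + (1−β) y, τ(β)) (union of open balls). Define r = sup_{β: τ(β)>0} τ(β), d_min = inf_{β: τ(β)>0} (β‖x−y‖ − τ(β)), d_max = sup_{β: τ(β)>0} (β‖x−y‖ + τ(β)), u = (x−y)/‖x−y‖, c₁ = y + (d_min + r)u, c₂ = y + (d_max − r)u, and let S_cap = conv(B(c₁, r) ∪ B(c₂, r)). Assume r, d_min, d_max are finite and d_min + 2r ≤ d_max. Then S ⊆ S_cap. -/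
/-- The teardrop equivalence region is contained in its capsule approximation. -/
theorem stmt_7 {n : ℕ} (x y : EuclideanSpace ℝ (Fin n)) (hxy : x ≠ y)
    (τ : ℝ → ℝ) (hτ : ∀ β ∈ Set.Ioo (0:ℝ) (1/2), 0 ≤ τ β)
    (D : Set ℝ) (hD : D = {β ∈ Set.Ioo (0:ℝ) (1/2) | 0 < τ β})
    (hDne : D.Nonempty)
    (r dmin dmax : ℝ)
    (hr : r = sSup (τ '' D))
    (hdmin : dmin = sInf ((fun β => β * ‖x - y‖ - τ β) '' D))
    (hdmax : dmax = sSup ((fun β => β * ‖x - y‖ + τ β) '' D))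
    (hbr : BddAbove (τ '' D))
    (hbmin : BddBelow ((fun β => β * ‖x - y‖ - τ β) '' D))
    (hbmax : BddAbove ((fun β => β * ‖x - y‖ + τ β) '' D))
    (hcap : dmin + 2 * r ≤ dmax)
    (u c1 c2 : EuclideanSpace ℝ (Fin n))
    (hu : u = ‖x - y‖⁻¹ • (x - y))
    (hc1 : c1 = y + (dmin + r) • u)
    (hc2 : c2 = y + (dmax - r) • u) :
    (⋃ β ∈ Set.Ioo (0:ℝ) (1/2), Metric.ball (β • x + (1 - β) • y) (τ β))
      ⊆ convexHull ℝ (Metric.ball c1 r ∪ Metric.ball c2 r) := by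
  intro p hp
  simp only [Set.mem_iUnion, Metric.mem_ball] at hp
  obtain ⟨β, hβ, hp⟩ := hp
  have hτβ : 0 < τ β := lt_of_le_of_lt dist_nonneg hp
  have hβD : β ∈ D := by rw [hD]; exact ⟨hβ, hτβ⟩
  have hnx : 0 < ‖x - y‖ := by simpa [sub_eq_zero] using hxy
  set t := β * ‖x - y‖ with ht
  have hle_r : τ β ≤ r := hr ▸ le_csSup hbr ⟨β, hβD, rfl⟩
  have hmin : dmin ≤ t - τ β := hdmin ▸ csInf_le hbmin ⟨β, hβD, rfl⟩
  have hmax : t + τ β ≤ dmax := hdmax ▸ le_csSup hbmax ⟨β, hβD, rfl⟩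
  have hunorm : ‖u‖ = 1 := by
    rw [hu, norm_smul, norm_inv, norm_norm, inv_mul_cancel₀ hnx.ne']
  have hcen : β • x + (1 - β) • y = y + t • u := by
    rw [hu, smul_smul, ht]
    have h1 : β * ‖x - y‖ * ‖x - y‖⁻¹ = β := by field_simp
    rw [h1]; module
  set s := max (dmin + r) (min t (dmax - r)) with hs
  have hs1 : dmin + r ≤ s := le_max_left _ _
  have hs2 : s ≤ dmax - r := max_le (by linarith) (min_le_right _ _)
  have hts1 : s ≤ t + (r - τ β) :=
    max_le (by linarith) (le_trans (min_le_left _ _) (by linarith))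
  have hts2 : t - (r - τ β) ≤ s :=
    le_trans (le_min (by linarith) (by linarith)) (le_max_right _ _)
  have hts : |t - s| ≤ r - τ β := abs_le.2 ⟨by linarith, by linarith⟩
  -- distance from p to y + s • u
  have hpq : ‖p - (y + s • u)‖ < r := by
    have h1 : ‖p - (y + s • u)‖ ≤ ‖p - (y + t • u)‖ + ‖(y + t • u) - (y + s • u)‖ :=
      norm_sub_le_norm_sub_add_norm_sub _ _ _
    have h2 : ‖p - (y + t • u)‖ < τ β := by
      rw [← hcen]; simpa [dist_eq_norm] using hp
    have h3 : (y + t • u) - (y + s • u) = (t - s) • u := by module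
    have h4 : ‖(y + t • u) - (y + s • u)‖ = |t - s| := by
      rw [h3, norm_smul, hunorm, mul_one, Real.norm_eq_abs]
    linarith
  -- convex combination parameter
  have hd : 0 ≤ (dmax - r) - (dmin + r) := by linarith
  obtain ⟨θ, hθ0, hθ1, hθs⟩ :
      ∃ θ : ℝ, 0 ≤ θ ∧ θ ≤ 1 ∧ θ * (dmin + r) + (1 - θ) * (dmax - r) = s := by
    rcases eq_or_lt_of_le hd with heq | hlt
    · exact ⟨1, zero_le_one, le_refl 1, by nlinarith⟩
    · refine ⟨((dmax - r) - s) / ((dmax - r) - (dmin + r)), div_nonneg (by linarith) hlt.le,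
        by rw [div_le_one hlt]; linarith, ?_⟩
      field_simp
      ring
  have hq : (y + s • u) = θ • c1 + (1 - θ) • c2 := by
    rw [hc1, hc2, ← hθs]; module
  -- the two endpoints
  have ha : p - (y + s • u) + c1 ∈ Metric.ball c1 r := by
    simp only [Metric.mem_ball, dist_eq_norm]
    simpa using hpq
  have hb : p - (y + s • u) + c2 ∈ Metric.ball c2 r := by
    simp only [Metric.mem_ball, dist_eq_norm]
    simpa using hpq
  have hmem := (convex_convexHull ℝ (Metric.ball c1 r ∪ Metric.ball c2 r))
    (subset_convexHull ℝ _ (Or.inl ha)) (subset_convexHull ℝ _ (Or.inr hb))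
    hθ0 (show (0:ℝ) ≤ 1 - θ by linarith) (show θ + (1 - θ) = 1 by ring)
  have hfinal : θ • (p - (y + s • u) + c1) + (1 - θ) • (p - (y + s • u) + c2) = p := by
    have : θ • c1 + (1 - θ) • c2 = y + s • u := hq.symm
    calc θ • (p - (y + s • u) + c1) + (1 - θ) • (p - (y + s • u) + c2)
        = (p - (y + s • u)) + (θ • c1 + (1 - θ) • c2) := by module
      _ = p := by rw [this]; abel
  rwa [hfinal] at hmem
end

section
/- Let L₁, …, L_n : ℝ → ℝ be convex differentiable 1-smooth functions, A an n×m real matrix with rows a_j, and λ ≥ 0. For ω₀ ∈ ℝᵐ define x₀ ∈ ℝⁿ by [x₀]_j = L_j'(⟨a_j, ω₀⟩), g(ω₀) = Σ_j L_j(⟨a_j, ω₀⟩) + λ‖ω₀‖₁, and f₀(x) = ½‖x − x₀‖² − g(ω₀). Define f(x) = Σ_j L_j*(x_j) + Σ_{i=1}^m φ_i(x), where L_j* is the convex conjugate of L_j and φ_i(x) = 0 if |⟨A_i, x⟩| ≤ λ and +∞ otherwise (A_i is the i-th column of A). Then f₀(x) ≤ f(x) for all x ∈ ℝⁿ. -/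
/-!
Put `u = A ω₀`. The descent bound `L(u + t) ≤ L(u) + L'(u) t + t²/2` for 1-smooth `L`, evaluated
at the step `t = x_j - L_j'(u_j)`, gives `L_j*(x_j) ≥ x_j u_j - L_j(u_j) + ½ (x_j - [x₀]_j)²`.
Summing over `j`, the cross term is `⟨x, A ω₀⟩ = ⟨Aᵀ x, ω₀⟩ ≥ -λ ‖ω₀‖₁` as soon as every
`|⟨A_i, x⟩| ≤ λ`; otherwise some `φ_i(x) = ⊤` and the right-hand side is `⊤`.
-/

open Finset Matrix NNReal

theorem le_of_forall_mul_deriv_nonneg {F : ℝ → ℝ} (hF : Differentiable ℝ F)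
    (hsign : ∀ s, 0 ≤ s * deriv F s) (t : ℝ) : F 0 ≤ F t := by
  rcases le_total 0 t with ht | ht
  · refine monotoneOn_of_deriv_nonneg (convex_Ici 0) hF.continuous.continuousOn
      hF.differentiableOn (fun s hs => ?_) Set.self_mem_Ici ht ht
    rw [interior_Ici] at hs
    exact nonneg_of_mul_nonneg_right (hsign s) hs
  · refine antitoneOn_of_deriv_nonpos (convex_Iic 0) hF.continuous.continuousOn
      hF.differentiableOn (fun s hs => ?_) ht Set.self_mem_Iic ht
    rw [interior_Iic] at hs
    nlinarith [hsign s, Set.mem_Iio.mp hs]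

theorem le_add_deriv_mul_add_sq_of_lipschitzWith_deriv {f : ℝ → ℝ} {K : ℝ≥0}
    (hf : Differentiable ℝ f) (hK : LipschitzWith K (deriv f)) (u t : ℝ) :
    f (u + t) ≤ f u + deriv f u * t + K / 2 * t ^ 2 := by
  set G : ℝ → ℝ := fun s => f u + deriv f u * s + K / 2 * s ^ 2 - f (u + s)
  have hG : ∀ s, HasDerivAt G (deriv f u + K * s - deriv f (u + s)) s := fun s => by
    refine ((((hasDerivAt_id s).const_mul (deriv f u)).const_add (f u)).add
      ((hasDerivAt_pow 2 s).const_mul ((K : ℝ) / 2)) |>.sub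
      ((hf (u + s)).hasDerivAt.comp s ((hasDerivAt_id s).const_add u))).congr_deriv ?_
    norm_num; ring
  have hsign : ∀ s, 0 ≤ s * deriv G s := fun s => by
    have hlip : |deriv f (u + s) - deriv f u| ≤ K * |s| := by
      simpa [Real.dist_eq] using hK.dist_le_mul (u + s) u
    have hprod : s * (deriv f (u + s) - deriv f u) ≤ |s| * (K * |s|) :=
      (le_abs_self _).trans (by rw [abs_mul]; gcongr)
    rw [(hG s).deriv]
    nlinarith [abs_mul_abs_self s]
  simpa [G] using le_of_forall_mul_deriv_nonneg (fun s => (hG s).differentiableAt) hsign t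

noncomputable def convexConjugate (f : ℝ → ℝ) (s : ℝ) : EReal :=
  ⨆ u : ℝ, ((s * u - f u : ℝ) : EReal)

theorem mul_sub_add_sq_div_le_convexConjugate {f : ℝ → ℝ} {K : ℝ≥0} (hK₀ : 0 < K)
    (hf : Differentiable ℝ f) (hK : LipschitzWith K (deriv f)) (s u : ℝ) :
    ((s * u - f u + (s - deriv f u) ^ 2 / (2 * K) : ℝ) : EReal) ≤ convexConjugate f s := by
  set d := s - deriv f u
  -- `u + d / K` minimises the quadratic upper bound on `f` that the descent lemma provides
  refine le_iSup_of_le (u + d / K) (EReal.coe_le_coe_iff.mpr ?_)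
  have hdescent := le_add_deriv_mul_add_sq_of_lipschitzWith_deriv hf hK u (d / K)
  have hK₀' : (K : ℝ) ≠ 0 := by positivity
  have hgain : d * (d / K) - K / 2 * (d / K) ^ 2 = d ^ 2 / (2 * K) := by
    field_simp; ring
  nlinarith

theorem EReal.coe_finset_sum {ι : Type*} (s : Finset ι) (f : ι → ℝ) :
    ((∑ i ∈ s, f i : ℝ) : EReal) = ∑ i ∈ s, (f i : EReal) :=
  map_sum (⟨⟨Real.toEReal, EReal.coe_zero⟩, EReal.coe_add⟩ : ℝ →+ EReal) f s

theorem neg_mul_sum_abs_le_dotProduct {ι : Type*} [Fintype ι] {v w : ι → ℝ} {c : ℝ}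
    (hv : ∀ i, |v i| ≤ c) : -(c * ∑ i, |w i|) ≤ v ⬝ᵥ w := by
  rw [mul_sum, ← sum_neg_distrib]
  refine sum_le_sum fun i _ => ?_
  have : |v i * w i| ≤ c * |w i| := by
    rw [abs_mul]; exact mul_le_mul_of_nonneg_right (hv i) (abs_nonneg _)
  linarith [neg_abs_le (v i * w i)]

theorem stmt_10_general {n m : ℕ} (L : Fin n → ℝ → ℝ) (A : Matrix (Fin n) (Fin m) ℝ) (lam : ℝ)
    (hdiff : ∀ j, Differentiable ℝ (L j))
    (hsmooth : ∀ j, LipschitzWith 1 (deriv (L j)))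
    (ω0 : Fin m → ℝ)
    (x0 : Fin n → ℝ) (hx0 : ∀ j, x0 j = deriv (L j) (A.mulVec ω0 j))
    (g : ℝ) (hg : g = ∑ j, L j (A.mulVec ω0 j) + lam * ∑ i, |ω0 i|)
    (Lstar : Fin n → ℝ → EReal)
    (hLstar : ∀ j s, Lstar j s = ⨆ u : ℝ, ((s * u - L j u : ℝ) : EReal))
    (φ : Fin m → (Fin n → ℝ) → EReal)
    (hφ : ∀ i x, φ i x = if |∑ j, A j i * x j| ≤ lam then (0 : EReal) else ⊤) :
    ∀ x : Fin n → ℝ,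
      ((1/2 * ∑ j, (x j - x0 j)^2 - g : ℝ) : EReal)
        ≤ ∑ j, Lstar j (x j) + ∑ i, φ i x := by
  intro x
  have hconj : ((∑ j, (x j * (A *ᵥ ω0) j - L j ((A *ᵥ ω0) j) + (x j - x0 j) ^ 2 / 2) : ℝ) : EReal)
      ≤ ∑ j, Lstar j (x j) := by
    rw [EReal.coe_finset_sum]
    refine sum_le_sum fun j _ => ?_
    rw [show Lstar j (x j) = convexConjugate (L j) (x j) from hLstar j (x j), hx0]
    convert mul_sub_add_sq_div_le_convexConjugate one_pos (hdiff j) (hsmooth j) (x j) ((A *ᵥ ω0) j)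
      using 3
    norm_num
  by_cases hfeas : ∀ i, |∑ j, A j i * x j| ≤ lam
  · have hφ0 : ∑ i, φ i x = 0 := sum_eq_zero fun i _ => by rw [hφ, if_pos (hfeas i)]
    rw [hφ0, add_zero]
    refine le_trans (EReal.coe_le_coe_iff.mpr ?_) hconj
    have hdual := neg_mul_sum_abs_le_dotProduct (v := x ᵥ* A) (w := ω0) fun i => by
      simpa only [vecMul, dotProduct, mul_comm] using hfeas i
    rw [← dotProduct_mulVec] at hdual
    simp only [dotProduct] at hdual
    simp only [hg, sum_add_distrib, sum_sub_distrib, ← sum_div]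
    linarith
  · push Not at hfeas
    obtain ⟨i, hi⟩ := hfeas
    have hφtop : ∑ i, φ i x = ⊤ := top_le_iff.mp <|
      calc ⊤ = φ i x := by rw [hφ, if_neg hi.not_ge]
        _ ≤ ∑ i, φ i x := single_le_sum (f := fun k => φ k x)
          (fun k _ => by rw [hφ]; split <;> simp) (mem_univ i)
    rw [hφtop, EReal.add_top_of_ne_bot (ne_bot_of_le_ne_bot (EReal.coe_ne_bot _) hconj)]
    exact le_top

/-- f₀ lower bounds the dual objective of ℓ1-regularized smooth loss minimization. -/
theorem stmt_10 {n m : ℕ} (L : Fin n → ℝ → ℝ) (A : Matrix (Fin n) (Fin m) ℝ) (lam : ℝ)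
    (hlam : 0 ≤ lam)
    (hconv : ∀ j, ConvexOn ℝ Set.univ (L j))
    (hdiff : ∀ j, Differentiable ℝ (L j))
    (hsmooth : ∀ j, LipschitzWith 1 (deriv (L j)))
    (ω0 : Fin m → ℝ)
    (x0 : Fin n → ℝ) (hx0 : ∀ j, x0 j = deriv (L j) (A.mulVec ω0 j))
    (g : ℝ) (hg : g = ∑ j, L j (A.mulVec ω0 j) + lam * ∑ i, |ω0 i|)
    (Lstar : Fin n → ℝ → EReal)
    (hLstar : ∀ j s, Lstar j s = ⨆ u : ℝ, ((s * u - L j u : ℝ) : EReal))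
    (φ : Fin m → (Fin n → ℝ) → EReal)
    (hφ : ∀ i x, φ i x = if |∑ j, A j i * x j| ≤ lam then (0 : EReal) else ⊤) :
    ∀ x : Fin n → ℝ,
      ((1/2 * ∑ j, (x j - x0 j)^2 - g : ℝ) : EReal)
        ≤ ∑ j, Lstar j (x j) + ∑ i, φ i x :=
  stmt_10_general L A lam hdiff hsmooth ω0 x0 hx0 g hg Lstar hLstar φ hφ
end
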